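/- arXiv:1603.01420 — 5 statements merged into one kernel-verified Lean document; each statement's English description precedes it below -/
import Mathlib

section
/- Let J be a finite nonempty index set, let I ⊆ ℝ be an interval, let g : I → ℝ be monotone nondecreasing and, for each j ∈ J, let f_j : I → ℝ be monotone nonincreasing. For η ∈ I define the rectangle C_j(η) = {(R₁, R₂) ∈ ℝ² : R₁ ≤ f_j(η), R₂ ≤ g(η)} and C(η) = {(R₁, R₂) : R₁ ≤ min_j f_j(η), R₂ ≤ g(η)}. Then ⋂_{j∈J} ⋃_{η∈I} C_j(η) = ⋃_{η∈I} C(η). -/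
theorem stmt_5 {J : Type*} [Fintype J] [Nonempty J] (S : Set ℝ) (hS : S.OrdConnected)
    (g : ℝ → ℝ) (hg : MonotoneOn g S) (f : J → ℝ → ℝ) (hf : ∀ j, AntitoneOn (f j) S) :
    (⋂ j : J, ⋃ η ∈ S, {p : ℝ × ℝ | p.1 ≤ f j η ∧ p.2 ≤ g η})
      = ⋃ η ∈ S, {p : ℝ × ℝ | (∀ j : J, p.1 ≤ f j η) ∧ p.2 ≤ g η} := by
  ext p
  simp only [Set.mem_iInter, Set.mem_iUnion, Set.mem_setOf_eq]
  constructor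
  · intro h
    choose η hηS h1 h2 using h
    obtain ⟨j0, -, hj0⟩ := Finset.exists_min_image Finset.univ η Finset.univ_nonempty
    exact ⟨η j0, hηS j0,
      fun j => (h1 j).trans (hf j (hηS j0) (hηS j) (hj0 j (Finset.mem_univ j))),
      h2 j0⟩
  · rintro ⟨η, hη, h1, h2⟩ j
    exact ⟨η, hη, h1 j, h2⟩
end

section
/- For reals P_v ≥ 0, C > 0, K ≥ 0, define R(x) = (1/2)·log₂(P_v + 1) − (1/2)·log₂( K·(P_v − x)/√(x+1) + √(x+1) ) for x ∈ [0, P_v]. If K·(P_v+1) > 1 then R is strictly increasing at x = 0; in particular R(x) > R(0) for sufficiently small x > 0, so the multiple-description rate strictly exceeds the common-description rate R(0). -/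
/-!
The rate is `½ log₂ (P_v + 1) − ½ log₂ g(x)` with `g(x) = K (P_v − x) / √(x + 1) + √(x + 1)`,
so it increases exactly where `g` decreases. Now `g'(0) = (1 − K (P_v + 2)) / 2`, which is negative
because `K (P_v + 2) > K (P_v + 1) > 1`; a negative derivative at `0` forces `g(x) < g(0)` for all
small `x > 0`, and `log₂` is strictly monotone on the positive values of `g`.
-/

open Filter Topology Real

theorem HasDerivAt.eventually_lt_right_of_neg {f : ℝ → ℝ} {f' a : ℝ} (hf : HasDerivAt f f' a)
    (hf' : f' < 0) : ∀ᶠ x in 𝓝[>] a, f x < f a := by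
  have hslope : Tendsto (slope f a) (𝓝[>] a) (𝓝 f') :=
    hf.tendsto_slope.mono_left (nhdsGT_le_nhdsNE a)
  filter_upwards [hslope.eventually (eventually_lt_nhds hf'), self_mem_nhdsWithin] with x hneg hx
  rw [slope_def_field, div_neg_iff] at hneg
  rcases hneg with ⟨-, hxa⟩ | ⟨hlt, -⟩
  · exact absurd hx (not_lt.2 (sub_nonpos.1 hxa.le))
  · linarith

noncomputable def rateArg (K P x : ℝ) : ℝ := K * (P - x) / √(x + 1) + √(x + 1)

theorem rateArg_pos {K P x : ℝ} (hK : 0 ≤ K) (hx : 0 ≤ x) (hxP : x ≤ P) :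
    0 < rateArg K P x := by
  have hsqrt : 0 < √(x + 1) := sqrt_pos.2 (by linarith)
  have hfrac : 0 ≤ K * (P - x) / √(x + 1) := div_nonneg (mul_nonneg hK (by linarith)) hsqrt.le
  unfold rateArg
  linarith

theorem hasDerivAt_rateArg_zero (K P : ℝ) :
    HasDerivAt (rateArg K P) ((1 - K * (P + 2)) / 2) 0 := by
  have hsqrt : HasDerivAt (fun x : ℝ => √(x + 1)) (1 / 2) 0 := by
    refine (((hasDerivAt_id' (0 : ℝ)).add_const 1).sqrt (by norm_num)).congr_deriv ?_
    norm_num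
  have hlin : HasDerivAt (fun x : ℝ => K * (P - x)) (-K) 0 := by
    simpa using ((hasDerivAt_id (0 : ℝ)).const_sub P).const_mul K
  refine ((hlin.div hsqrt (by norm_num)).add hsqrt).congr_deriv ?_
  norm_num
  ring

theorem eventually_rateArg_lt_rateArg_zero {K P : ℝ} (h : 1 < K * (P + 2)) :
    ∀ᶠ x in 𝓝[>] 0, rateArg K P x < rateArg K P 0 :=
  (hasDerivAt_rateArg_zero K P).eventually_lt_right_of_neg (by linarith)

theorem stmt_9_general (Pv K : ℝ) (hPv : 0 ≤ Pv)
    (R : ℝ → ℝ)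
    (hR : ∀ x ∈ Set.Icc 0 Pv, R x = (1 / 2) * Real.logb 2 (Pv + 1)
      - (1 / 2) * Real.logb 2 (K * (Pv - x) / Real.sqrt (x + 1) + Real.sqrt (x + 1)))
    (hcond : K * (Pv + 1) > 1) :
    ∃ ε > 0, ∀ x : ℝ, 0 < x → x < ε → x ≤ Pv → R 0 < R x := by
  have hK : 0 < K := pos_of_mul_pos_left (one_pos.trans hcond) (by linarith)
  have hdecr := eventually_rateArg_lt_rateArg_zero (K := K) (P := Pv) (by nlinarith)
  obtain ⟨ε, hε, hlt⟩ := (nhdsGT_basis 0).eventually_iff.1 hdecr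
  refine ⟨ε, hε, fun x hx hxε hxP => ?_⟩
  have hlog : logb 2 (rateArg K Pv x) < logb 2 (rateArg K Pv 0) :=
    logb_lt_logb one_lt_two (rateArg_pos hK.le hx.le hxP) (hlt ⟨hx, hxε⟩)
  rw [hR 0 ⟨le_rfl, hPv⟩, hR x ⟨hx.le, hxP⟩]
  unfold rateArg at hlog
  linarith

theorem stmt_9 (Pv C K : ℝ) (hPv : 0 ≤ Pv) (hC : 0 < C) (hK : 0 ≤ K)
    (R : ℝ → ℝ)
    (hR : ∀ x ∈ Set.Icc 0 Pv, R x = (1 / 2) * Real.logb 2 (Pv + 1)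
      - (1 / 2) * Real.logb 2 (K * (Pv - x) / Real.sqrt (x + 1) + Real.sqrt (x + 1)))
    (hcond : K * (Pv + 1) > 1) :
    ∃ ε > 0, ∀ x : ℝ, 0 < x → x < ε → x ≤ Pv → R 0 < R x :=
  stmt_9_general Pv K hPv R hR hcond
end

section
/- Let N ≥ 1, and for j = 1,…,N let b_j > 0, and define R_{1,j}(η) = (1/2)·log₂((1 + b_j²P₂ + P₁ + 2b_j√((1−η)P₁P₂))/(1 + b_j²ηP₂)) for η ∈ [0,1], with P₁, P₂ > 0. Then each R_{1,j} is monotone nonincreasing in η on [0,1]. -/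
theorem stmt_12 (N : ℕ) (hN : 1 ≤ N) (b : Fin N → ℝ) (hb : ∀ j, 0 < b j)
    (P₁ P₂ : ℝ) (hP₁ : 0 < P₁) (hP₂ : 0 < P₂) :
    ∀ j : Fin N, AntitoneOn (fun η : ℝ =>
        (1 / 2) * Real.logb 2
          ((1 + (b j) ^ 2 * P₂ + P₁ + 2 * b j * Real.sqrt ((1 - η) * P₁ * P₂)) /
            (1 + (b j) ^ 2 * η * P₂)))
      (Set.Icc 0 1) := by
  intro j x hx y hy hxy
  simp only
  have hbj := hb j
  have hx0 := hx.1
  have hy1 := hy.2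
  have hDx : (0:ℝ) < 1 + (b j) ^ 2 * x * P₂ := by
    nlinarith [mul_nonneg (mul_nonneg (sq_nonneg (b j)) hx0) hP₂.le]
  have hDy : (0:ℝ) < 1 + (b j) ^ 2 * y * P₂ := by
    nlinarith [mul_nonneg (mul_nonneg (sq_nonneg (b j)) hy.1) hP₂.le]
  have hDle : 1 + (b j) ^ 2 * x * P₂ ≤ 1 + (b j) ^ 2 * y * P₂ := by
    nlinarith [mul_nonneg (mul_nonneg (sq_nonneg (b j)) (sub_nonneg.2 hxy)) hP₂.le]
  have hsq : Real.sqrt ((1 - y) * P₁ * P₂) ≤ Real.sqrt ((1 - x) * P₁ * P₂) := by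
    apply Real.sqrt_le_sqrt
    nlinarith [mul_nonneg (mul_nonneg (sub_nonneg.2 hxy) hP₁.le) hP₂.le]
  have hNy : (0:ℝ) < 1 + (b j) ^ 2 * P₂ + P₁ + 2 * b j * Real.sqrt ((1 - y) * P₁ * P₂) := by
    have := Real.sqrt_nonneg ((1 - y) * P₁ * P₂)
    nlinarith
  have hNle : 1 + (b j) ^ 2 * P₂ + P₁ + 2 * b j * Real.sqrt ((1 - y) * P₁ * P₂) ≤
      1 + (b j) ^ 2 * P₂ + P₁ + 2 * b j * Real.sqrt ((1 - x) * P₁ * P₂) := by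
    nlinarith
  have hdiv : (1 + (b j) ^ 2 * P₂ + P₁ + 2 * b j * Real.sqrt ((1 - y) * P₁ * P₂)) /
      (1 + (b j) ^ 2 * y * P₂) ≤
      (1 + (b j) ^ 2 * P₂ + P₁ + 2 * b j * Real.sqrt ((1 - x) * P₁ * P₂)) /
      (1 + (b j) ^ 2 * x * P₂) :=
    div_le_div₀ (by linarith) hNle hDx hDle
  have hpos : (0:ℝ) < (1 + (b j) ^ 2 * P₂ + P₁ + 2 * b j * Real.sqrt ((1 - y) * P₁ * P₂)) /
      (1 + (b j) ^ 2 * y * P₂) := div_pos hNy hDy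
  have := Real.logb_le_logb_of_le (by norm_num : (1:ℝ) < 2) hpos hdiv
  linarith
end

section
/- Let X₂, Z, Y, X₁, U be finite random variables such that U −◦− (X₁,X₂) −◦− (Y,Z), and suppose the channel satisfies: for every joint distribution Q on the alphabet of (X₁,X₂), the induced mutual informations obey I_Q(X₂;Z|X₁) ≤ I_Q(X₂;Y|X₁), where the conditional laws of (Y,Z) given (X₁,X₂) are fixed. Then I(X₂; Z | X₁, U) ≤ I(X₂; Y | X₁, U). -/
open BigOperators

/-- Shannon entropy of a finite random variable `X` on a finite space with pmf `p`. -/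
noncomputable def entropy {Ω α : Type*} [Fintype Ω] [Fintype α] [DecidableEq α]
    (p : Ω → ℝ) (X : Ω → α) : ℝ :=
  ∑ a, Real.negMulLog (∑ ω, if X ω = a then p ω else 0)

/-- Mutual information `I(X;Y)`. -/
noncomputable def mutInfo {Ω α β : Type*} [Fintype Ω] [Fintype α] [DecidableEq α]
    [Fintype β] [DecidableEq β] (p : Ω → ℝ) (X : Ω → α) (Y : Ω → β) : ℝ :=
  entropy p X + entropy p Y - entropy p (fun ω => (X ω, Y ω))

/-- Conditional mutual information `I(X;Y|Z)`. -/
noncomputable def condMutInfo {Ω α β γ : Type*} [Fintype Ω] [Fintype α] [DecidableEq α]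
    [Fintype β] [DecidableEq β] [Fintype γ] [DecidableEq γ]
    (p : Ω → ℝ) (X : Ω → α) (Y : Ω → β) (Z : Ω → γ) : ℝ :=
  entropy p (fun ω => (X ω, Z ω)) + entropy p (fun ω => (Y ω, Z ω))
    - entropy p (fun ω => (X ω, Y ω, Z ω)) - entropy p Z

/-- `p` is a probability mass function. -/
def IsPMF {Ω : Type*} [Fintype Ω] (p : Ω → ℝ) : Prop :=
  (∀ ω, 0 ≤ p ω) ∧ ∑ ω, p ω = 1

/-- Markov chain `X -∘- Y -∘- Z`: `P(X=a,Y=b,Z=c) P(Y=b) = P(X=a,Y=b) P(Y=b,Z=c)`. -/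
def MarkovChain {Ω α β γ : Type*} [Fintype Ω] [DecidableEq α] [DecidableEq β] [DecidableEq γ]
    (p : Ω → ℝ) (X : Ω → α) (Y : Ω → β) (Z : Ω → γ) : Prop :=
  ∀ a b c,
    (∑ ω, if X ω = a ∧ Y ω = b ∧ Z ω = c then p ω else 0) *
      (∑ ω, if Y ω = b then p ω else 0)
    = (∑ ω, if X ω = a ∧ Y ω = b then p ω else 0) *
      (∑ ω, if Y ω = b ∧ Z ω = c then p ω else 0)


private lemma sum_if_congr {Ω : Type*} [Fintype Ω] (p : Ω → ℝ) {P Q : Ω → Prop}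
    [DecidablePred P] [DecidablePred Q] (h : ∀ ω, P ω ↔ Q ω) :
    (∑ ω, if P ω then p ω else 0) = ∑ ω, if Q ω then p ω else 0 :=
  Finset.sum_congr rfl fun ω _ => by rw [if_congr (h ω) rfl rfl]

private lemma entropy_map {Ω Ω' α : Type*} [Fintype Ω] [Fintype Ω'] [DecidableEq Ω']
    [Fintype α] [DecidableEq α] (p : Ω → ℝ) (g : Ω → Ω') (f : Ω' → α) :
    entropy p (fun ω => f (g ω)) = entropy (fun ω' => ∑ ω, if g ω = ω' then p ω else 0) f := by
  unfold entropy
  refine Finset.sum_congr rfl fun a _ => ?_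
  congr 1
  have h1 : ∀ ω', (if f ω' = a then (∑ ω, if g ω = ω' then p ω else 0) else 0)
      = ∑ ω, if g ω = ω' ∧ f ω' = a then p ω else 0 := by
    intro ω'; by_cases h : f ω' = a <;> simp [h]
  simp only [h1]
  rw [Finset.sum_comm]
  refine Finset.sum_congr rfl fun ω _ => ?_
  simp only [ite_and]
  rw [Finset.sum_ite_eq]
  simp

private lemma decomp {ι : Type*} [Fintype ι] (c : ℝ) (T : ι → ℝ) (hT : ∀ i, 0 ≤ T i)
    (hsum : ∑ i, T i = c) :
    ∑ i, Real.negMulLog (T i)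
      = Real.negMulLog c + c * ∑ i, Real.negMulLog (T i / c) := by
  have hc0 : 0 ≤ c := hsum ▸ Finset.sum_nonneg fun i _ => hT i
  rcases hc0.eq_or_lt with h | h
  · have hz : ∀ i ∈ Finset.univ, T i = 0 := fun i _ =>
      (Finset.sum_eq_zero_iff_of_nonneg (fun j _ => hT j)).mp (hsum.trans h.symm) i
        (Finset.mem_univ i)
    have h2 : ∑ i, Real.negMulLog (T i) = 0 :=
      Finset.sum_eq_zero fun i hi => by rw [hz i hi]; exact Real.negMulLog_zero
    rw [h2, ← h]
    simp
  · have hc : c ≠ 0 := ne_of_gt h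
    have key : ∀ i, Real.negMulLog (T i)
        = (T i / c) * Real.negMulLog c + c * Real.negMulLog (T i / c) := by
      intro i
      rw [← Real.negMulLog_mul c (T i / c), mul_div_cancel₀ _ hc]
    rw [Finset.sum_congr rfl fun i _ => key i, Finset.sum_add_distrib, ← Finset.sum_mul,
      ← Finset.sum_div, hsum, div_self hc, one_mul, ← Finset.mul_sum]

private lemma decompose {υ α₁ α₂ σ δ : Type*} [Fintype υ] [DecidableEq υ]
    [Fintype α₁] [DecidableEq α₁] [Fintype α₂] [DecidableEq α₂]
    [Fintype σ] [DecidableEq σ] [Fintype δ] [DecidableEq δ]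
    (W : α₁ → α₂ → σ → ℝ) (hW1 : ∀ x₁ x₂, ∑ s, W x₁ x₂ s = 1)
    (hW0 : ∀ x₁ x₂ s, 0 ≤ W x₁ x₂ s)
    (m : α₁ → α₂ → υ → ℝ) (hm0 : ∀ x₁ x₂ u, 0 ≤ m x₁ x₂ u)
    (v : σ → δ) :
    condMutInfo (fun w : (α₁ × α₂) × σ × υ => m w.1.1 w.1.2 w.2.2 * W w.1.1 w.1.2 w.2.1)
        (fun w => w.1.2) (fun w => v w.2.1) (fun w => (w.1.1, w.2.2))
      = ∑ u, (∑ x₁, ∑ x₂, m x₁ x₂ u) *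
          condMutInfo (fun w : (α₁ × α₂) × σ =>
              (m w.1.1 w.1.2 u / ∑ x₁, ∑ x₂, m x₁ x₂ u) * W w.1.1 w.1.2 w.2)
            (fun w => w.1.2) (fun w => v w.2) (fun w => w.1.1) := by
  set c : υ → ℝ := fun u => ∑ x₁, ∑ x₂, m x₁ x₂ u with hc
  set WV : α₁ → α₂ → δ → ℝ := fun x₁ x₂ d => ∑ s, if v s = d then W x₁ x₂ s else 0 with hWV
  have hWV1 : ∀ x₁ x₂, ∑ d, WV x₁ x₂ d = 1 := by
    intro x₁ x₂
    rw [hWV]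
    rw [Finset.sum_comm]
    simp [Finset.sum_ite_eq, hW1]
  have hWV0 : ∀ x₁ x₂ d, 0 ≤ WV x₁ x₂ d := by
    intro x₁ x₂ d
    refine Finset.sum_nonneg fun s _ => ?_
    split <;> simp [hW0]
  -- sums of m reorderings
  have hcsum : ∀ u, ∑ b : α₂ × α₁, m b.2 b.1 u = c u := by
    intro u
    rw [Fintype.sum_prod_type, Finset.sum_comm, hc]
  have hfW : ∀ (r : ℝ) (x₁ x₂ d), (∑ s, if v s = d then r * W x₁ x₂ s else 0)
      = r * WV x₁ x₂ d := by
    intro r x₁ x₂ d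
    rw [hWV, Finset.mul_sum]
    exact Finset.sum_congr rfl fun s _ => by split <;> simp
  -- reindexing equivalences
  let e : (α₂ × σ × α₁ × υ) ≃ ((α₁ × α₂) × σ × υ) :=
    ⟨fun z => ((z.2.2.1, z.1), z.2.1, z.2.2.2), fun w => (w.1.2, w.2.1, w.1.1, w.2.2),
      fun _ => rfl, fun _ => rfl⟩
  set T : (α₁ × α₂) × σ × υ → ℝ :=
    fun w => m w.1.1 w.1.2 w.2.2 * W w.1.1 w.1.2 w.2.1 with hT
  set r : υ → (α₁ × α₂) × σ → ℝ :=
    fun u w => (m w.1.1 w.1.2 u / c u) * W w.1.1 w.1.2 w.2 with hr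
  -- pmf computations, T side
  have hp1 : ∀ a : α₂ × α₁ × υ,
      (∑ w, if ((w.1.2 : α₂), ((w.1.1 : α₁), w.2.2)) = a then T w else 0)
        = m a.2.1 a.1 a.2.2 := by
    rintro ⟨a₂, a₁, u⟩
    rw [← Equiv.sum_comp e (fun w => if ((w.1.2 : α₂), ((w.1.1 : α₁), w.2.2)) = (a₂, a₁, u) then T w else 0)]
    simp only [e, Equiv.coe_fn_mk, hT, Fintype.sum_prod_type, Prod.mk.injEq, ite_and,
      Finset.sum_ite_irrel, Finset.sum_ite_eq, Finset.sum_ite_eq', Finset.sum_const_zero,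
      Finset.mem_univ, if_true, ← Finset.mul_sum, hW1, mul_one]
  have hp2 : ∀ a : δ × α₁ × υ,
      (∑ w, if ((v w.2.1 : δ), ((w.1.1 : α₁), w.2.2)) = a then T w else 0)
        = ∑ x₂, m a.2.1 x₂ a.2.2 * WV a.2.1 x₂ a.1 := by
    rintro ⟨d, a₁, u⟩
    rw [← Equiv.sum_comp e (fun w => if ((v w.2.1 : δ), ((w.1.1 : α₁), w.2.2)) = (d, a₁, u) then T w else 0)]
    simp only [e, Equiv.coe_fn_mk, hT, Fintype.sum_prod_type, Prod.mk.injEq, ite_and,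
      Finset.sum_ite_irrel, Finset.sum_ite_eq, Finset.sum_ite_eq', Finset.sum_const_zero,
      Finset.mem_univ, if_true, hfW]
  have hp3 : ∀ a : α₂ × δ × α₁ × υ,
      (∑ w, if ((w.1.2 : α₂), (v w.2.1 : δ), ((w.1.1 : α₁), w.2.2)) = a then T w else 0)
        = m a.2.2.1 a.1 a.2.2.2 * WV a.2.2.1 a.1 a.2.1 := by
    rintro ⟨a₂, d, a₁, u⟩
    rw [← Equiv.sum_comp e (fun w => if ((w.1.2 : α₂), (v w.2.1 : δ), ((w.1.1 : α₁), w.2.2)) = (a₂, d, a₁, u) then T w else 0)]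
    simp only [e, Equiv.coe_fn_mk, hT, Fintype.sum_prod_type, Prod.mk.injEq, ite_and,
      Finset.sum_ite_irrel, Finset.sum_ite_eq, Finset.sum_ite_eq', Finset.sum_const_zero,
      Finset.mem_univ, if_true, hfW]
  have hp4 : ∀ a : α₁ × υ,
      (∑ w, if (((w.1.1 : α₁), w.2.2) : α₁ × υ) = a then T w else 0)
        = ∑ x₂, m a.1 x₂ a.2 := by
    rintro ⟨a₁, u⟩
    rw [← Equiv.sum_comp e (fun w => if (((w.1.1 : α₁), w.2.2) : α₁ × υ) = (a₁, u) then T w else 0)]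
    simp only [e, Equiv.coe_fn_mk, hT, Fintype.sum_prod_type, Prod.mk.injEq, ite_and,
      Finset.sum_ite_irrel, Finset.sum_ite_eq, Finset.sum_ite_eq', Finset.sum_const_zero,
      Finset.mem_univ, if_true, ← Finset.mul_sum, hW1, mul_one]
  -- pmf computations, r side
  let e' : (α₂ × σ × α₁) ≃ ((α₁ × α₂) × σ) :=
    ⟨fun z => ((z.2.2, z.1), z.2.1), fun w => (w.1.2, w.2, w.1.1), fun _ => rfl, fun _ => rfl⟩
  have hq1 : ∀ u (b : α₂ × α₁),
      (∑ w, if ((w.1.2 : α₂), (w.1.1 : α₁)) = b then r u w else 0)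
        = m b.2 b.1 u / c u := by
    rintro u ⟨b₂, b₁⟩
    rw [← Equiv.sum_comp e' (fun w => if ((w.1.2 : α₂), (w.1.1 : α₁)) = (b₂, b₁) then r u w else 0)]
    simp only [e', Equiv.coe_fn_mk, hr, Fintype.sum_prod_type, Prod.mk.injEq, ite_and,
      Finset.sum_ite_irrel, Finset.sum_ite_eq, Finset.sum_ite_eq', Finset.sum_const_zero,
      Finset.mem_univ, if_true, ← Finset.mul_sum, hW1, mul_one]
  have hq2 : ∀ u (b : δ × α₁),
      (∑ w, if ((v w.2 : δ), (w.1.1 : α₁)) = b then r u w else 0)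
        = ∑ x₂, (m b.2 x₂ u / c u) * WV b.2 x₂ b.1 := by
    rintro u ⟨d, b₁⟩
    rw [← Equiv.sum_comp e' (fun w => if ((v w.2 : δ), (w.1.1 : α₁)) = (d, b₁) then r u w else 0)]
    simp only [e', Equiv.coe_fn_mk, hr, Fintype.sum_prod_type, Prod.mk.injEq, ite_and,
      Finset.sum_ite_irrel, Finset.sum_ite_eq, Finset.sum_ite_eq', Finset.sum_const_zero,
      Finset.mem_univ, if_true, hfW]
  have hq3 : ∀ u (b : α₂ × δ × α₁),
      (∑ w, if ((w.1.2 : α₂), (v w.2 : δ), (w.1.1 : α₁)) = b then r u w else 0)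
        = (m b.2.2 b.1 u / c u) * WV b.2.2 b.1 b.2.1 := by
    rintro u ⟨b₂, d, b₁⟩
    rw [← Equiv.sum_comp e' (fun w => if ((w.1.2 : α₂), (v w.2 : δ), (w.1.1 : α₁)) = (b₂, d, b₁) then r u w else 0)]
    simp only [e', Equiv.coe_fn_mk, hr, Fintype.sum_prod_type, Prod.mk.injEq, ite_and,
      Finset.sum_ite_irrel, Finset.sum_ite_eq, Finset.sum_ite_eq', Finset.sum_const_zero,
      Finset.mem_univ, if_true, hfW]
  have hq4 : ∀ u (b : α₁),
      (∑ w, if (w.1.1 : α₁) = b then r u w else 0)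
        = ∑ x₂, m b x₂ u / c u := by
    rintro u b₁
    rw [← Equiv.sum_comp e' (fun w => if (w.1.1 : α₁) = b₁ then r u w else 0)]
    simp only [e', Equiv.coe_fn_mk, hr, Fintype.sum_prod_type, Prod.mk.injEq, ite_and,
      Finset.sum_ite_irrel, Finset.sum_ite_eq, Finset.sum_ite_eq', Finset.sum_const_zero,
      Finset.mem_univ, if_true, ← Finset.mul_sum, hW1, mul_one]
  -- sums to c u
  have hS2 : ∀ u, (∑ i : δ × α₁, ∑ x₂, m i.2 x₂ u * WV i.2 x₂ i.1) = c u := by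
    intro u
    rw [Fintype.sum_prod_type, Finset.sum_comm, hc]
    refine Finset.sum_congr rfl fun x₁ _ => ?_
    rw [Finset.sum_comm]
    refine Finset.sum_congr rfl fun x₂ _ => ?_
    show (∑ d : δ, m x₁ x₂ u * WV x₁ x₂ d) = m x₁ x₂ u
    rw [← Finset.mul_sum, hWV1, mul_one]
  have hS3 : ∀ u, (∑ i : α₂ × δ × α₁, m i.2.2 i.1 u * WV i.2.2 i.1 i.2.1) = c u := by
    intro u
    have key : ∀ x₂, (∑ d : δ, ∑ x₁, m x₁ x₂ u * WV x₁ x₂ d) = ∑ x₁, m x₁ x₂ u := by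
      intro x₂
      rw [Finset.sum_comm]
      refine Finset.sum_congr rfl fun x₁ _ => ?_
      show (∑ d : δ, m x₁ x₂ u * WV x₁ x₂ d) = m x₁ x₂ u
      rw [← Finset.mul_sum, hWV1, mul_one]
    simp only [Fintype.sum_prod_type]
    rw [Finset.sum_congr rfl fun x₂ _ => key x₂, Finset.sum_comm, hc]
  have hS4 : ∀ u, (∑ x₁, ∑ x₂, m x₁ x₂ u) = c u := fun u => by rw [hc]
  -- the four entropy terms
  have t1 : entropy T (fun w => (w.1.2, (w.1.1, w.2.2)))
      = ∑ u, (Real.negMulLog (c u) + c u * entropy (r u) (fun w => (w.1.2, w.1.1))) := by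
    simp only [entropy, hp1, hq1]
    rw [← Equiv.sum_comp
      (⟨fun z => (z.2.1, z.2.2, z.1), fun a => (a.2.2, a.1, a.2.1), fun _ => rfl, fun _ => rfl⟩ :
        (υ × α₂ × α₁) ≃ (α₂ × α₁ × υ))
      (fun a : α₂ × α₁ × υ => Real.negMulLog (m a.2.1 a.1 a.2.2)), Fintype.sum_prod_type]
    simp only [Equiv.coe_fn_mk]
    exact Finset.sum_congr rfl fun u _ =>
      decomp (c u) (fun b : α₂ × α₁ => m b.2 b.1 u) (fun b => hm0 _ _ _) (hcsum u)
  have t2 : entropy T (fun w => (v w.2.1, (w.1.1, w.2.2)))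
      = ∑ u, (Real.negMulLog (c u) + c u * entropy (r u) (fun w => (v w.2, w.1.1))) := by
    simp only [entropy, hp2, hq2]
    rw [← Equiv.sum_comp
      (⟨fun z => (z.2.1, z.2.2, z.1), fun a => (a.2.2, a.1, a.2.1), fun _ => rfl, fun _ => rfl⟩ :
        (υ × δ × α₁) ≃ (δ × α₁ × υ))
      (fun a : δ × α₁ × υ => Real.negMulLog (∑ x₂, m a.2.1 x₂ a.2.2 * WV a.2.1 x₂ a.1)),
      Fintype.sum_prod_type]
    simp only [Equiv.coe_fn_mk]
    refine Finset.sum_congr rfl fun u _ => ?_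
    rw [decomp (c u) (fun i : δ × α₁ => ∑ x₂, m i.2 x₂ u * WV i.2 x₂ i.1)
      (fun i => Finset.sum_nonneg fun x₂ _ => mul_nonneg (hm0 _ _ _) (hWV0 _ _ _)) (hS2 u)]
    congr 2
    refine Finset.sum_congr rfl fun i _ => congrArg Real.negMulLog ?_
    rw [Finset.sum_div]
    exact Finset.sum_congr rfl fun x₂ _ => mul_div_right_comm _ _ _
  have t3 : entropy T (fun w => (w.1.2, v w.2.1, (w.1.1, w.2.2)))
      = ∑ u, (Real.negMulLog (c u) + c u * entropy (r u) (fun w => (w.1.2, v w.2, w.1.1))) := by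
    simp only [entropy, hp3, hq3]
    rw [← Equiv.sum_comp
      (⟨fun z => (z.2.1, z.2.2.1, z.2.2.2, z.1), fun a => (a.2.2.2, a.1, a.2.1, a.2.2.1),
        fun _ => rfl, fun _ => rfl⟩ : (υ × α₂ × δ × α₁) ≃ (α₂ × δ × α₁ × υ))
      (fun a : α₂ × δ × α₁ × υ =>
        Real.negMulLog (m a.2.2.1 a.1 a.2.2.2 * WV a.2.2.1 a.1 a.2.1)), Fintype.sum_prod_type]
    simp only [Equiv.coe_fn_mk]
    refine Finset.sum_congr rfl fun u _ => ?_
    rw [decomp (c u) (fun i : α₂ × δ × α₁ => m i.2.2 i.1 u * WV i.2.2 i.1 i.2.1)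
      (fun i => mul_nonneg (hm0 _ _ _) (hWV0 _ _ _)) (hS3 u)]
    congr 2
    exact Finset.sum_congr rfl fun i _ =>
      congrArg Real.negMulLog (mul_div_right_comm _ _ _)
  have t4 : entropy T (fun w => (w.1.1, w.2.2))
      = ∑ u, (Real.negMulLog (c u) + c u * entropy (r u) (fun w => w.1.1)) := by
    simp only [entropy, hp4, hq4]
    rw [← Equiv.sum_comp
      (⟨fun z => (z.2, z.1), fun a => (a.2, a.1), fun _ => rfl, fun _ => rfl⟩ :
        (υ × α₁) ≃ (α₁ × υ))
      (fun a : α₁ × υ => Real.negMulLog (∑ x₂, m a.1 x₂ a.2)), Fintype.sum_prod_type]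
    simp only [Equiv.coe_fn_mk]
    refine Finset.sum_congr rfl fun u _ => ?_
    rw [decomp (c u) (fun x₁ => ∑ x₂, m x₁ x₂ u)
      (fun x₁ => Finset.sum_nonneg fun x₂ _ => hm0 _ _ _) (hS4 u)]
    congr 2
    exact Finset.sum_congr rfl fun x₁ _ => congrArg Real.negMulLog (Finset.sum_div _ _ _)
  show condMutInfo T (fun w => w.1.2) (fun w => v w.2.1) (fun w => (w.1.1, w.2.2))
      = ∑ u, c u * condMutInfo (r u) (fun w => w.1.2) (fun w => v w.2) (fun w => w.1.1)
  simp only [condMutInfo]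
  rw [t1, t2, t3, t4, ← Finset.sum_add_distrib, ← Finset.sum_sub_distrib,
    ← Finset.sum_sub_distrib]
  exact Finset.sum_congr rfl fun u _ => by ring

/-- Conditioning preserves the strong interference inequality: given a fixed channel
`W` from `(X₁,X₂)` to `(Y,Z)` such that for *every* input distribution the induced joint
distribution satisfies `I(X₂;Z|X₁) ≤ I(X₂;Y|X₁)`, and given random variables whose joint
law is consistent with `W` and satisfies the Markov chain `U -∘- (X₁,X₂) -∘- (Y,Z)`,
we get `I(X₂;Z|X₁,U) ≤ I(X₂;Y|X₁,U)`. -/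
theorem stmt_14 {Ω υ α₁ α₂ β γ : Type*} [Fintype Ω] [Fintype υ] [DecidableEq υ]
    [Fintype α₁] [DecidableEq α₁] [Fintype α₂] [DecidableEq α₂]
    [Fintype β] [DecidableEq β] [Fintype γ] [DecidableEq γ]
    (p : Ω → ℝ) (hp : IsPMF p)
    (U : Ω → υ) (X₁ : Ω → α₁) (X₂ : Ω → α₂) (Y : Ω → β) (Z : Ω → γ)
    (hM : MarkovChain p U (fun ω => (X₁ ω, X₂ ω)) (fun ω => (Y ω, Z ω)))
    -- the channel P_{YZ|X₁X₂}
    (W : α₁ → α₂ → β → γ → ℝ)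
    (hWpos : ∀ x₁ x₂ y z, 0 ≤ W x₁ x₂ y z)
    (hWsum : ∀ x₁ x₂, ∑ y, ∑ z, W x₁ x₂ y z = 1)
    -- the joint law of (X₁,X₂,Y,Z) is consistent with the channel W
    (hconsistent : ∀ x₁ x₂ y z,
      (∑ ω, if X₁ ω = x₁ ∧ X₂ ω = x₂ ∧ Y ω = y ∧ Z ω = z then p ω else 0)
        = (∑ ω, if X₁ ω = x₁ ∧ X₂ ω = x₂ then p ω else 0) * W x₁ x₂ y z)
    -- strong interference holds for every joint input distribution q
    (hSI : ∀ q : α₁ × α₂ → ℝ, IsPMF q →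
      condMutInfo (fun w : (α₁ × α₂) × β × γ => q w.1 * W w.1.1 w.1.2 w.2.1 w.2.2)
          (fun w => w.1.2) (fun w => w.2.2) (fun w => w.1.1)
        ≤ condMutInfo (fun w : (α₁ × α₂) × β × γ => q w.1 * W w.1.1 w.1.2 w.2.1 w.2.2)
          (fun w => w.1.2) (fun w => w.2.1) (fun w => w.1.1)) :
    condMutInfo p X₂ Z (fun ω => (X₁ ω, U ω))
      ≤ condMutInfo p X₂ Y (fun ω => (X₁ ω, U ω)) := by
  obtain ⟨hp0, _⟩ := hp
  set m : α₁ → α₂ → υ → ℝ :=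
    fun x₁ x₂ u => ∑ ω, if X₁ ω = x₁ ∧ X₂ ω = x₂ ∧ U ω = u then p ω else 0 with hm
  have hm0 : ∀ x₁ x₂ u, 0 ≤ m x₁ x₂ u := fun x₁ x₂ u =>
    Finset.sum_nonneg fun ω _ => by split <;> simp [hp0 ω]
  set Wm : α₁ → α₂ → (β × γ) → ℝ := fun x₁ x₂ s => W x₁ x₂ s.1 s.2 with hWm
  have hWm1 : ∀ x₁ x₂, ∑ s : β × γ, Wm x₁ x₂ s = 1 := fun x₁ x₂ => by
    rw [Fintype.sum_prod_type]; exact hWsum x₁ x₂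
  have hWm0 : ∀ x₁ x₂ s, 0 ≤ Wm x₁ x₂ s := fun x₁ x₂ s => hWpos _ _ _ _
  set g₀ : Ω → (α₁ × α₂) × (β × γ) × υ := fun ω => ((X₁ ω, X₂ ω), (Y ω, Z ω), U ω) with hg
  set p' : (α₁ × α₂) × (β × γ) × υ → ℝ := fun w => ∑ ω, if g₀ ω = w then p ω else 0 with hp'
  -- the pushforward distribution factors through the channel
  have hT : ∀ w, p' w = m w.1.1 w.1.2 w.2.2 * Wm w.1.1 w.1.2 w.2.1 := by
    rintro ⟨⟨x₁, x₂⟩, ⟨y, z⟩, u⟩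
    show (∑ ω, if g₀ ω = ((x₁, x₂), (y, z), u) then p ω else 0) = m x₁ x₂ u * W x₁ x₂ y z
    have h5 : (∑ ω, if g₀ ω = ((x₁, x₂), (y, z), u) then p ω else 0)
        = ∑ ω, if X₁ ω = x₁ ∧ X₂ ω = x₂ ∧ Y ω = y ∧ Z ω = z ∧ U ω = u then p ω else 0 :=
      sum_if_congr p fun ω => by simp [hg, Prod.ext_iff]; tauto
    rw [h5]
    have hMk := hM u (x₁, x₂) (y, z)
    have e1 : (∑ ω, if U ω = u ∧ (fun ω => (X₁ ω, X₂ ω)) ω = (x₁, x₂)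
          ∧ (fun ω => (Y ω, Z ω)) ω = (y, z) then p ω else 0)
        = ∑ ω, if X₁ ω = x₁ ∧ X₂ ω = x₂ ∧ Y ω = y ∧ Z ω = z ∧ U ω = u then p ω else 0 :=
      sum_if_congr p fun ω => by simp [Prod.ext_iff]; tauto
    have e2 : (∑ ω, if (fun ω => (X₁ ω, X₂ ω)) ω = (x₁, x₂) then p ω else 0)
        = ∑ ω, if X₁ ω = x₁ ∧ X₂ ω = x₂ then p ω else 0 :=
      sum_if_congr p fun ω => by simp [Prod.ext_iff]
    have e3 : (∑ ω, if U ω = u ∧ (fun ω => (X₁ ω, X₂ ω)) ω = (x₁, x₂) then p ω else 0)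
        = m x₁ x₂ u :=
      sum_if_congr p fun ω => by simp [Prod.ext_iff]; tauto
    have e4 : (∑ ω, if (fun ω => (X₁ ω, X₂ ω)) ω = (x₁, x₂)
          ∧ (fun ω => (Y ω, Z ω)) ω = (y, z) then p ω else 0)
        = ∑ ω, if X₁ ω = x₁ ∧ X₂ ω = x₂ ∧ Y ω = y ∧ Z ω = z then p ω else 0 :=
      sum_if_congr p fun ω => by simp [Prod.ext_iff]; tauto
    rw [e1, e2, e3, e4, hconsistent x₁ x₂ y z] at hMk
    set A := ∑ ω, if X₁ ω = x₁ ∧ X₂ ω = x₂ then p ω else 0 with hA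
    rcases eq_or_ne A 0 with h | h
    · have hz : ∀ ω, (X₁ ω = x₁ ∧ X₂ ω = x₂) → p ω = 0 := by
        intro ω hω
        have := (Finset.sum_eq_zero_iff_of_nonneg
          (fun ω _ => by split <;> simp [hp0 ω])).mp h ω (Finset.mem_univ ω)
        simpa [hω] using this
      have hB5 : (∑ ω, if X₁ ω = x₁ ∧ X₂ ω = x₂ ∧ Y ω = y ∧ Z ω = z ∧ U ω = u
          then p ω else 0) = 0 := by
        refine Finset.sum_eq_zero fun ω _ => ?_
        split_ifs with hω
        · exact hz ω ⟨hω.1, hω.2.1⟩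
        · rfl
      have hm3 : m x₁ x₂ u = 0 := by
        refine Finset.sum_eq_zero fun ω _ => ?_
        split_ifs with hω
        · exact hz ω ⟨hω.1, hω.2.1⟩
        · rfl
      rw [hB5, hm3, zero_mul]
    · have : (∑ ω, if X₁ ω = x₁ ∧ X₂ ω = x₂ ∧ Y ω = y ∧ Z ω = z ∧ U ω = u
          then p ω else 0) * A = (m x₁ x₂ u * W x₁ x₂ y z) * A := by
        rw [hMk]; ring
      exact mul_right_cancel₀ h this
  have hp'T : p' = fun w => m w.1.1 w.1.2 w.2.2 * Wm w.1.1 w.1.2 w.2.1 := funext hT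
  -- reduce both sides to the pushforward distribution
  have a1 : entropy p (fun ω => (X₂ ω, (X₁ ω, U ω)))
      = entropy p' (fun w => (w.1.2, (w.1.1, w.2.2))) :=
    entropy_map p g₀ (fun w => (w.1.2, (w.1.1, w.2.2)))
  have a4 : entropy p (fun ω => (X₁ ω, U ω))
      = entropy p' (fun w => (w.1.1, w.2.2)) :=
    entropy_map p g₀ (fun w => (w.1.1, w.2.2))
  have a2Z : entropy p (fun ω => (Z ω, (X₁ ω, U ω)))
      = entropy p' (fun w => (w.2.1.2, (w.1.1, w.2.2))) :=
    entropy_map p g₀ (fun w => (w.2.1.2, (w.1.1, w.2.2)))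
  have a3Z : entropy p (fun ω => (X₂ ω, Z ω, (X₁ ω, U ω)))
      = entropy p' (fun w => (w.1.2, w.2.1.2, (w.1.1, w.2.2))) :=
    entropy_map p g₀ (fun w => (w.1.2, w.2.1.2, (w.1.1, w.2.2)))
  have a2Y : entropy p (fun ω => (Y ω, (X₁ ω, U ω)))
      = entropy p' (fun w => (w.2.1.1, (w.1.1, w.2.2))) :=
    entropy_map p g₀ (fun w => (w.2.1.1, (w.1.1, w.2.2)))
  have a3Y : entropy p (fun ω => (X₂ ω, Y ω, (X₁ ω, U ω)))
      = entropy p' (fun w => (w.1.2, w.2.1.1, (w.1.1, w.2.2))) :=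
    entropy_map p g₀ (fun w => (w.1.2, w.2.1.1, (w.1.1, w.2.2)))
  have hZred : condMutInfo p X₂ Z (fun ω => (X₁ ω, U ω))
      = condMutInfo p' (fun w => w.1.2) (fun w => w.2.1.2) (fun w => (w.1.1, w.2.2)) := by
    simp only [condMutInfo]
    rw [a1, a2Z, a3Z, a4]
  have hYred : condMutInfo p X₂ Y (fun ω => (X₁ ω, U ω))
      = condMutInfo p' (fun w => w.1.2) (fun w => w.2.1.1) (fun w => (w.1.1, w.2.2)) := by
    simp only [condMutInfo]
    rw [a1, a2Y, a3Y, a4]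
  rw [hZred, hYred, hp'T,
    decompose Wm hWm1 hWm0 m hm0 (Prod.snd : β × γ → γ),
    decompose Wm hWm1 hWm0 m hm0 (Prod.fst : β × γ → β)]
  refine Finset.sum_le_sum fun u _ => ?_
  have hS0 : 0 ≤ ∑ x₁, ∑ x₂, m x₁ x₂ u :=
    Finset.sum_nonneg fun x₁ _ => Finset.sum_nonneg fun x₂ _ => hm0 _ _ _
  rcases hS0.eq_or_lt with h | h
  · rw [← h, zero_mul, zero_mul]
  · refine mul_le_mul_of_nonneg_left ?_ h.le
    have hq : IsPMF (fun x : α₁ × α₂ => m x.1 x.2 u / ∑ x₁, ∑ x₂, m x₁ x₂ u) := by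
      constructor
      · exact fun x => div_nonneg (hm0 _ _ _) h.le
      · rw [Fintype.sum_prod_type]
        rw [show (∑ x₁, ∑ x₂, m x₁ x₂ u / ∑ x₁, ∑ x₂, m x₁ x₂ u)
            = (∑ x₁, ∑ x₂, m x₁ x₂ u) / (∑ x₁, ∑ x₂, m x₁ x₂ u) by
          rw [Finset.sum_div]
          exact Finset.sum_congr rfl fun x₁ _ => (Finset.sum_div _ _ _).symm]
        exact div_self (ne_of_gt h)
    have hfin := hSI (fun x : α₁ × α₂ => m x.1 x.2 u / ∑ x₁, ∑ x₂, m x₁ x₂ u) hq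
    simp only [hWm]
    exact hfin
end

section
/- For any two finite random sequences X₁,…,X_n and Y₁,…,Y_n and any finite random variable C on a common probability space, the identity ∑_{i=1}^n I(Y_{i+1}^n ; X_i | C, X^{i-1}) = ∑_{j=1}^n I(X^{j-1} ; Y_j | C, Y_{j+1}^n) holds, where X^{i-1} = (X₁,…,X_{i−1}) and Y_{i+1}^n = (Y_{i+1},…,Y_n) (empty tuples when indices are out of range). -/
open BigOperators

lemma entropy_pair_left {Ω α β : Type*} [Fintype Ω] [Fintype α] [DecidableEq α]
    [Fintype β] [DecidableEq β] (p : Ω → ℝ) (X : Ω → α) (Y : Ω → β) (f : α → β)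
    (hf : ∀ ω, Y ω = f (X ω)) :
    entropy p (fun ω => (X ω, Y ω)) = entropy p X := by
  unfold entropy
  rw [Fintype.sum_prod_type]
  refine Finset.sum_congr rfl fun a _ => ?_
  have key : ∀ b : β, (∑ ω, if (X ω, Y ω) = (a, b) then p ω else 0)
      = if b = f a then (∑ ω, if X ω = a then p ω else 0) else 0 := by
    intro b
    split_ifs with h
    · subst h
      refine Finset.sum_congr rfl fun ω _ => ?_
      refine if_congr ?_ rfl rfl
      constructor
      · intro h; exact congrArg Prod.fst h
      · intro h; rw [hf ω, h]
    · refine Finset.sum_eq_zero fun ω _ => if_neg ?_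
      intro hc
      rw [Prod.mk.injEq] at hc
      exact h (by rw [← hc.2, hf ω, hc.1])
  simp only [key, apply_ite Real.negMulLog, Real.negMulLog_zero]
  simp

lemma entropy_pair_right {Ω α β : Type*} [Fintype Ω] [Fintype α] [DecidableEq α]
    [Fintype β] [DecidableEq β] (p : Ω → ℝ) (X : Ω → α) (Y : Ω → β) (g : β → α)
    (hg : ∀ ω, X ω = g (Y ω)) :
    entropy p (fun ω => (X ω, Y ω)) = entropy p Y := by
  unfold entropy
  rw [Fintype.sum_prod_type_right]
  refine Finset.sum_congr rfl fun b _ => ?_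
  have key : ∀ a : α, (∑ ω, if (X ω, Y ω) = (a, b) then p ω else 0)
      = if a = g b then (∑ ω, if Y ω = b then p ω else 0) else 0 := by
    intro a
    split_ifs with h
    · subst h
      refine Finset.sum_congr rfl fun ω _ => ?_
      refine if_congr ?_ rfl rfl
      constructor
      · intro h; exact congrArg Prod.snd h
      · intro h; rw [hg ω, h]
    · refine Finset.sum_eq_zero fun ω _ => if_neg ?_
      intro hc
      rw [Prod.mk.injEq] at hc
      exact h (by rw [← hc.1, hg ω, hc.2])
  simp only [key, apply_ite Real.negMulLog, Real.negMulLog_zero]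
  simp

lemma entropy_congr {Ω α β : Type*} [Fintype Ω] [Fintype α] [DecidableEq α]
    [Fintype β] [DecidableEq β] (p : Ω → ℝ) (X : Ω → α) (Y : Ω → β)
    (f : α → β) (g : β → α) (hf : ∀ ω, Y ω = f (X ω)) (hg : ∀ ω, X ω = g (Y ω)) :
    entropy p X = entropy p Y := by
  rw [← entropy_pair_left p X Y f hf, entropy_pair_right p X Y g hg]

noncomputable def Gent {Ω α β γ : Type*} [Fintype Ω] [Fintype α] [DecidableEq α]
    [Fintype β] [DecidableEq β] [Fintype γ] [DecidableEq γ]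
    (p : Ω → ℝ) (n : ℕ) (X : Fin n → Ω → α) (Y : Fin n → Ω → β) (C : Ω → γ)
    (i j : ℕ) : ℝ :=
  entropy p (fun ω => (C ω,
    (fun k : Fin (min i n) => X ⟨k.1, by have := k.isLt; omega⟩ ω),
    (fun k : Fin (n - j) => Y ⟨j + k.1, by have := k.isLt; omega⟩ ω)))

/-- Csiszár & Körner's sum identity:
`∑ i, I(Y_{i+1}^n ; X_i | C, X^{i-1}) = ∑ j, I(X^{j-1} ; Y_j | C, Y_{j+1}^n)`. -/
theorem stmt_16 {Ω α β γ : Type*} [Fintype Ω] [Fintype α] [DecidableEq α]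
    [Fintype β] [DecidableEq β] [Fintype γ] [DecidableEq γ]
    (p : Ω → ℝ) (hp : IsPMF p) (n : ℕ)
    (X : Fin n → Ω → α) (Y : Fin n → Ω → β) (C : Ω → γ) :
    ∑ i : Fin n,
        condMutInfo p
          (fun ω => fun j : Fin (n - (i.1 + 1)) =>
            Y ⟨i.1 + 1 + j.1, by have := j.isLt; have := i.isLt; omega⟩ ω)
          (X i)
          (fun ω => (C ω, fun j : Fin i.1 => X (Fin.castLE (le_of_lt i.isLt) j) ω))
      = ∑ j : Fin n,
          condMutInfo p
            (fun ω => fun k : Fin j.1 => X (Fin.castLE (le_of_lt j.isLt) k) ω)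
            (Y j)
            (fun ω => (C ω, fun k : Fin (n - (j.1 + 1)) =>
              Y ⟨j.1 + 1 + k.1, by have := k.isLt; have := j.isLt; omega⟩ ω)) := by
  set G : ℕ → ℕ → ℝ := Gent p n X Y C with hGdef
  trans (∑ i : Fin n, (G (i : ℕ) ((i : ℕ) + 1) + G ((i : ℕ) + 1) n
      - G ((i : ℕ) + 1) ((i : ℕ) + 1) - G (i : ℕ) n))
  · refine Finset.sum_congr rfl fun i _ => ?_
    unfold condMutInfo
    rw [hGdef]
    refine congrArg₂ (· - ·) (congrArg₂ (· - ·) (congrArg₂ (· + ·) ?_ ?_) ?_) ?_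
    -- 1 : H(Y_{>i}, C, X_{<i}) = G i (i+1)
    · exact entropy_congr p _ _
        (fun x : (Fin (n - ((i : ℕ) + 1)) → β) × γ × (Fin (i : ℕ) → α) =>
          ((x.2.1,
            fun k : Fin (min (i : ℕ) n) => x.2.2 ⟨k.1, by have := k.isLt; omega⟩,
            x.1) : γ × (Fin (min (i : ℕ) n) → α) × (Fin (n - ((i : ℕ) + 1)) → β)))
        (fun x : γ × (Fin (min (i : ℕ) n) → α) × (Fin (n - ((i : ℕ) + 1)) → β) =>
          (x.2.2, x.1,
            fun k : Fin (i : ℕ) => x.2.1 ⟨k.1, by have := k.isLt; have := i.isLt; omega⟩))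
        (fun ω => rfl) (fun ω => rfl)
    -- 2 : H(X_i, C, X_{<i}) = G (i+1) n
    · refine entropy_congr p _ _
        (fun x : α × γ × (Fin (i : ℕ) → α) =>
          ((x.2.1,
            fun k : Fin (min ((i : ℕ) + 1) n) =>
              if h : k.1 < (i : ℕ) then x.2.2 ⟨k.1, h⟩ else x.1,
            fun k : Fin (n - n) => absurd k.isLt (by omega)) :
            γ × (Fin (min ((i : ℕ) + 1) n) → α) × (Fin (n - n) → β)))
        (fun x : γ × (Fin (min ((i : ℕ) + 1) n) → α) × (Fin (n - n) → β) =>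
          (x.2.1 ⟨(i : ℕ), by have := i.isLt; omega⟩, x.1,
            fun k : Fin (i : ℕ) => x.2.1 ⟨k.1, by have := k.isLt; have := i.isLt; omega⟩))
        ?_ (fun ω => rfl)
      intro ω
      refine congrArg₂ Prod.mk rfl (congrArg₂ Prod.mk ?_ ?_) <;> funext k
      · by_cases h : (k : ℕ) < (i : ℕ)
        · rw [dif_pos h]; rfl
        · rw [dif_neg h]
          have hk : ((⟨k.1, by have := k.isLt; omega⟩ : Fin n)) = i :=
            Fin.ext (by simp; omega)
          exact congrFun (congrArg X hk) ω
      · exact absurd k.isLt (by omega)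
    -- 3 : H(Y_{>i}, X_i, C, X_{<i}) = G (i+1) (i+1)
    · refine entropy_congr p _ _
        (fun x : (Fin (n - ((i : ℕ) + 1)) → β) × α × γ × (Fin (i : ℕ) → α) =>
          ((x.2.2.1,
            fun k : Fin (min ((i : ℕ) + 1) n) =>
              if h : k.1 < (i : ℕ) then x.2.2.2 ⟨k.1, h⟩ else x.2.1,
            x.1) :
            γ × (Fin (min ((i : ℕ) + 1) n) → α) × (Fin (n - ((i : ℕ) + 1)) → β)))
        (fun x : γ × (Fin (min ((i : ℕ) + 1) n) → α) × (Fin (n - ((i : ℕ) + 1)) → β) =>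
          (x.2.2, x.2.1 ⟨(i : ℕ), by have := i.isLt; omega⟩, x.1,
            fun k : Fin (i : ℕ) => x.2.1 ⟨k.1, by have := k.isLt; have := i.isLt; omega⟩))
        ?_ (fun ω => rfl)
      intro ω
      refine congrArg₂ Prod.mk rfl (congrArg₂ Prod.mk ?_ rfl)
      funext k
      by_cases h : (k : ℕ) < (i : ℕ)
      · rw [dif_pos h]; rfl
      · rw [dif_neg h]
        have hk : ((⟨k.1, by have := k.isLt; omega⟩ : Fin n)) = i :=
          Fin.ext (by simp; omega)
        exact congrFun (congrArg X hk) ω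
    -- 4 : H(C, X_{<i}) = G i n
    · refine entropy_congr p _ _
        (fun x : γ × (Fin (i : ℕ) → α) =>
          ((x.1,
            fun k : Fin (min (i : ℕ) n) => x.2 ⟨k.1, by have := k.isLt; omega⟩,
            fun k : Fin (n - n) => absurd k.isLt (by omega)) :
            γ × (Fin (min (i : ℕ) n) → α) × (Fin (n - n) → β)))
        (fun x : γ × (Fin (min (i : ℕ) n) → α) × (Fin (n - n) → β) =>
          (x.1,
            fun k : Fin (i : ℕ) => x.2.1 ⟨k.1, by have := k.isLt; have := i.isLt; omega⟩))
        ?_ (fun ω => rfl)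
      intro ω
      refine congrArg₂ Prod.mk rfl (congrArg₂ Prod.mk rfl ?_)
      funext k
      exact absurd k.isLt (by omega)
  trans (∑ j : Fin n, (G (j : ℕ) ((j : ℕ) + 1) + G 0 (j : ℕ)
      - G (j : ℕ) (j : ℕ) - G 0 ((j : ℕ) + 1)))
  · -- telescoping
    rw [Fin.sum_univ_eq_sum_range (fun m => G m (m + 1) + G (m + 1) n
        - G (m + 1) (m + 1) - G m n) n,
      Fin.sum_univ_eq_sum_range (fun m => G m (m + 1) + G 0 m
        - G m m - G 0 (m + 1)) n,
      ← sub_eq_zero, ← Finset.sum_sub_distrib]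
    have h1 : ∀ m ∈ Finset.range n,
        (G m (m + 1) + G (m + 1) n - G (m + 1) (m + 1) - G m n)
          - (G m (m + 1) + G 0 m - G m m - G 0 (m + 1))
        = ((G (m + 1) n - G m n) - (G (m + 1) (m + 1) - G m m))
            + (G 0 (m + 1) - G 0 m) := fun m _ => by ring
    rw [Finset.sum_congr rfl h1, Finset.sum_add_distrib, Finset.sum_sub_distrib,
      Finset.sum_range_sub (fun m => G m n), Finset.sum_range_sub (fun m => G m m),
      Finset.sum_range_sub (fun m => G 0 m)]
    ring
  · refine Finset.sum_congr rfl fun j _ => ?_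
    symm
    unfold condMutInfo
    rw [hGdef]
    refine congrArg₂ (· - ·) (congrArg₂ (· - ·) (congrArg₂ (· + ·) ?_ ?_) ?_) ?_
    -- R1 : H(X_{<j}, C, Y_{>j}) = G j (j+1)
    · exact entropy_congr p _ _
        (fun x : (Fin (j : ℕ) → α) × γ × (Fin (n - ((j : ℕ) + 1)) → β) =>
          ((x.2.1,
            fun k : Fin (min (j : ℕ) n) => x.1 ⟨k.1, by have := k.isLt; omega⟩,
            x.2.2) : γ × (Fin (min (j : ℕ) n) → α) × (Fin (n - ((j : ℕ) + 1)) → β)))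
        (fun x : γ × (Fin (min (j : ℕ) n) → α) × (Fin (n - ((j : ℕ) + 1)) → β) =>
          ((fun k : Fin (j : ℕ) => x.2.1 ⟨k.1, by have := k.isLt; have := j.isLt; omega⟩),
            x.1, x.2.2))
        (fun ω => rfl) (fun ω => rfl)
    -- R2 : H(Y_j, C, Y_{>j}) = G 0 j
    · refine entropy_congr p _ _
        (fun x : β × γ × (Fin (n - ((j : ℕ) + 1)) → β) =>
          ((x.2.1,
            fun k : Fin (min 0 n) => absurd k.isLt (by omega),
            fun k : Fin (n - (j : ℕ)) =>
              if h : k.1 = 0 then x.1 else x.2.2 ⟨k.1 - 1, by have := k.isLt; omega⟩) :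
            γ × (Fin (min 0 n) → α) × (Fin (n - (j : ℕ)) → β)))
        (fun x : γ × (Fin (min 0 n) → α) × (Fin (n - (j : ℕ)) → β) =>
          (x.2.2 ⟨0, by have := j.isLt; omega⟩, x.1,
            fun k : Fin (n - ((j : ℕ) + 1)) => x.2.2 ⟨k.1 + 1, by have := k.isLt; omega⟩))
        ?_ ?_
      · intro ω
        refine congrArg₂ Prod.mk rfl (congrArg₂ Prod.mk ?_ ?_) <;> funext k
        · exact absurd k.isLt (by omega)
        · by_cases h : (k : ℕ) = 0
          · rw [dif_pos h]
            have hk : ((⟨(j : ℕ) + k.1, by have := k.isLt; omega⟩ : Fin n)) = j :=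
              Fin.ext (by simp; omega)
            exact congrFun (congrArg Y hk) ω
          · rw [dif_neg h]
            have hk : ((⟨(j : ℕ) + k.1, by have := k.isLt; omega⟩ : Fin n))
                = ⟨(j : ℕ) + 1 + (k.1 - 1), by have := k.isLt; omega⟩ :=
              Fin.ext (by simp; omega)
            exact congrFun (congrArg Y hk) ω
      · intro ω
        refine congrArg₂ Prod.mk ?_ (congrArg₂ Prod.mk rfl ?_)
        · have hk : (j : Fin n) = ⟨(j : ℕ) + 0, by have := j.isLt; omega⟩ :=
            Fin.ext (by simp)
          exact congrFun (congrArg Y hk) ω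
        · funext k
          have hk : ((⟨(j : ℕ) + 1 + k.1, by have := k.isLt; omega⟩ : Fin n))
              = ⟨(j : ℕ) + (k.1 + 1), by have := k.isLt; omega⟩ :=
            Fin.ext (by simp; omega)
          exact congrFun (congrArg Y hk) ω
    -- R3 : H(X_{<j}, Y_j, C, Y_{>j}) = G j j
    · refine entropy_congr p _ _
        (fun x : (Fin (j : ℕ) → α) × β × γ × (Fin (n - ((j : ℕ) + 1)) → β) =>
          ((x.2.2.1,
            fun k : Fin (min (j : ℕ) n) => x.1 ⟨k.1, by have := k.isLt; omega⟩,
            fun k : Fin (n - (j : ℕ)) =>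
              if h : k.1 = 0 then x.2.1 else x.2.2.2 ⟨k.1 - 1, by have := k.isLt; omega⟩) :
            γ × (Fin (min (j : ℕ) n) → α) × (Fin (n - (j : ℕ)) → β)))
        (fun x : γ × (Fin (min (j : ℕ) n) → α) × (Fin (n - (j : ℕ)) → β) =>
          ((fun k : Fin (j : ℕ) => x.2.1 ⟨k.1, by have := k.isLt; have := j.isLt; omega⟩),
            x.2.2 ⟨0, by have := j.isLt; omega⟩, x.1,
            fun k : Fin (n - ((j : ℕ) + 1)) => x.2.2 ⟨k.1 + 1, by have := k.isLt; omega⟩))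
        ?_ ?_
      · intro ω
        refine congrArg₂ Prod.mk rfl (congrArg₂ Prod.mk rfl ?_)
        funext k
        by_cases h : (k : ℕ) = 0
        · rw [dif_pos h]
          have hk : ((⟨(j : ℕ) + k.1, by have := k.isLt; omega⟩ : Fin n)) = j :=
            Fin.ext (by simp; omega)
          exact congrFun (congrArg Y hk) ω
        · rw [dif_neg h]
          have hk : ((⟨(j : ℕ) + k.1, by have := k.isLt; omega⟩ : Fin n))
              = ⟨(j : ℕ) + 1 + (k.1 - 1), by have := k.isLt; omega⟩ :=
            Fin.ext (by simp; omega)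
          exact congrFun (congrArg Y hk) ω
      · intro ω
        refine congrArg₂ Prod.mk rfl (congrArg₂ Prod.mk ?_ (congrArg₂ Prod.mk rfl ?_))
        · have hk : (j : Fin n) = ⟨(j : ℕ) + 0, by have := j.isLt; omega⟩ :=
            Fin.ext (by simp)
          exact congrFun (congrArg Y hk) ω
        · funext k
          have hk : ((⟨(j : ℕ) + 1 + k.1, by have := k.isLt; omega⟩ : Fin n))
              = ⟨(j : ℕ) + (k.1 + 1), by have := k.isLt; omega⟩ :=
            Fin.ext (by simp; omega)
          exact congrFun (congrArg Y hk) ω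
    -- R4 : H(C, Y_{>j}) = G 0 (j+1)
    · refine entropy_congr p _ _
        (fun x : γ × (Fin (n - ((j : ℕ) + 1)) → β) =>
          ((x.1,
            fun k : Fin (min 0 n) => absurd k.isLt (by omega),
            x.2) : γ × (Fin (min 0 n) → α) × (Fin (n - ((j : ℕ) + 1)) → β)))
        (fun x : γ × (Fin (min 0 n) → α) × (Fin (n - ((j : ℕ) + 1)) → β) =>
          (x.1, x.2.2))
        ?_ (fun ω => rfl)
      intro ω
      refine congrArg₂ Prod.mk rfl (congrArg₂ Prod.mk ?_ rfl)
      funext k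
      exact absurd k.isLt (by omega)
end
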